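/- arXiv:1407.6513 — 4 statements merged into one kernel-verified Lean document; each statement's English description precedes it below -/
import Mathlib

section
/- Let n ≥ 1, let E = EuclideanSpace ℝ (Fin n), let η > 0 be a real constant, and let x : ℕ → E be a sequence of pattern vectors, α : ℕ → ℝ a sequence of step sizes and θ : ℕ → ℝ a sequence of thresholds with 0 < α t ≤ α 0 < 1/η and θ t ≥ 0 for all t. Define the sequence w : ℕ → E by the learning update w(t+1) = w(t) − α t • ( y(t) • (x(t) − (y(t)/‖w(t)‖²) • w(t)) + η • Γ(w(t), θ t) ), where y(t) = ⟪x(t), w(t)⟫ and Γ(v, θ) is the soft-threshold vector with i-th entry v_i if |v_i| ≤ θ and 0 otherwise. If ‖w 0‖ > 0, then ‖w t‖ > 0 for every t. -/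
/-!
Write `v = w t`. The Hebbian part `y • (x - (y / ‖v‖²) • v)` of the update is orthogonal to `v`
(it is `y` times the component of `x` orthogonal to `v`), so only the threshold term moves the
weight along `v`: `⟪v, w (t+1)⟫ = ‖v‖² - α t η ⟪v, Γ(v, θ)⟫`. Since `Γ(v, θ)` keeps a subset of
the coordinates of `v`, `0 ≤ ⟪v, Γ(v, θ)⟫ ≤ ‖v‖²`, and `α t η < 1` makes the right-hand side
positive. Hence `w (t+1) ≠ 0`.
-/

/-- Soft-threshold map: `(softThresh v θ) i = v i` if `|v i| ≤ θ`, and `0` otherwise. -/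
noncomputable def softThresh {n : ℕ} (v : EuclideanSpace ℝ (Fin n)) (θ : ℝ) :
    EuclideanSpace ℝ (Fin n) :=
  WithLp.toLp 2 (fun i => if |v i| ≤ θ then v i else 0)

open RealInnerProductSpace

section InnerProductSpace

variable {E : Type*} [NormedAddCommGroup E] [InnerProductSpace ℝ E]

theorem inner_sub_inner_div_norm_sq_smul_self {v : E} (hv : v ≠ 0) (x : E) :
    ⟪v, x - (⟪x, v⟫ / ‖v‖ ^ 2) • v⟫ = 0 := by
  rw [inner_sub_right, real_inner_smul_right, real_inner_self_eq_norm_sq,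
    div_mul_cancel₀ _ (by positivity), real_inner_comm, sub_self]

theorem inner_sub_smul_pos_of_inner_mem_Icc {v g : E} (hv : v ≠ 0) (hg₀ : 0 ≤ ⟪v, g⟫)
    (hg₁ : ⟪v, g⟫ ≤ ‖v‖ ^ 2) {c : ℝ} (hc : c < 1) : 0 < ⟪v, v - c • g⟫ := by
  have hv2 : 0 < ‖v‖ ^ 2 := by positivity
  rw [inner_sub_right, real_inner_smul_right, real_inner_self_eq_norm_sq]
  rcases le_or_gt 0 c with h | h <;> nlinarith

end InnerProductSpace

section SoftThreshold

variable {n : ℕ}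

theorem inner_softThresh_nonneg (v : EuclideanSpace ℝ (Fin n)) (θ : ℝ) :
    0 ≤ ⟪v, softThresh v θ⟫ := by
  refine Finset.sum_nonneg fun i _ => ?_
  simp only [softThresh, PiLp.toLp_apply, RCLike.inner_apply, conj_trivial]
  split_ifs
  · exact mul_self_nonneg _
  · simp

theorem inner_softThresh_le_norm_sq (v : EuclideanSpace ℝ (Fin n)) (θ : ℝ) :
    ⟪v, softThresh v θ⟫ ≤ ‖v‖ ^ 2 := by
  rw [← real_inner_self_eq_norm_sq]
  refine Finset.sum_le_sum fun i _ => ?_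
  simp only [softThresh, PiLp.toLp_apply, RCLike.inner_apply, conj_trivial]
  split_ifs
  · exact le_rfl
  · simpa using mul_self_nonneg (v i)

noncomputable def learningUpdate (η α θ : ℝ) (x v : EuclideanSpace ℝ (Fin n)) :
    EuclideanSpace ℝ (Fin n) :=
  v - α • (⟪x, v⟫ • (x - (⟪x, v⟫ / ‖v‖ ^ 2) • v) + η • softThresh v θ)

theorem inner_learningUpdate {v : EuclideanSpace ℝ (Fin n)} (hv : v ≠ 0)
    (η α θ : ℝ) (x : EuclideanSpace ℝ (Fin n)) :
    ⟪v, learningUpdate η α θ x v⟫ = ⟪v, v - (α * η) • softThresh v θ⟫ := by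
  simp only [learningUpdate, inner_sub_right, inner_add_right, real_inner_smul_right,
    inner_sub_inner_div_norm_sq_smul_self hv]
  ring

theorem learningUpdate_ne_zero {v : EuclideanSpace ℝ (Fin n)} (hv : v ≠ 0)
    {η α : ℝ} (hαη : α * η < 1) (θ : ℝ) (x : EuclideanSpace ℝ (Fin n)) :
    learningUpdate η α θ x v ≠ 0 := by
  have hpos : 0 < ⟪v, learningUpdate η α θ x v⟫ := by
    rw [inner_learningUpdate hv]
    exact inner_sub_smul_pos_of_inner_mem_Icc hv (inner_softThresh_nonneg v θ)
      (inner_softThresh_le_norm_sq v θ) hαη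
  intro h
  rw [h, inner_zero_right] at hpos
  exact hpos.false

end SoftThreshold

theorem weight_never_zero_general (n : ℕ) (η : ℝ) (hη : 0 < η)
    (x w : ℕ → EuclideanSpace ℝ (Fin n)) (α θ : ℕ → ℝ)
    (hα0 : ∀ t, α t ≤ α 0) (hαη : α 0 < 1 / η)
    (hupd : ∀ t, w (t + 1) =
      w t - α t • ((inner ℝ (x t) (w t) : ℝ) •
          (x t - ((inner ℝ (x t) (w t) : ℝ) / ‖w t‖ ^ 2) • w t)
        + η • softThresh (w t) (θ t)))
    (h0 : 0 < ‖w 0‖) :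
    ∀ t, 0 < ‖w t‖ := by
  intro t
  induction t with
  | zero => exact h0
  | succ t ih =>
    have hstep : α t * η < 1 := (lt_div_iff₀ hη).mp ((hα0 t).trans_lt hαη)
    have hupd' : w (t + 1) = learningUpdate η (α t) (θ t) (x t) (w t) := hupd t
    rw [hupd', norm_pos_iff]
    exact learningUpdate_ne_zero (norm_pos_iff.mp ih) hstep (θ t) (x t)

/-- Lemma 1: the weight vector never becomes zero along the learning iterations. -/
theorem weight_never_zero (n : ℕ) (hn : 1 ≤ n) (η : ℝ) (hη : 0 < η)
    (x w : ℕ → EuclideanSpace ℝ (Fin n)) (α θ : ℕ → ℝ)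
    (hαpos : ∀ t, 0 < α t) (hα0 : ∀ t, α t ≤ α 0) (hαη : α 0 < 1 / η)
    (hθ : ∀ t, 0 ≤ θ t)
    (hupd : ∀ t, w (t + 1) =
      w t - α t • ((inner ℝ (x t) (w t) : ℝ) •
          (x t - ((inner ℝ (x t) (w t) : ℝ) / ‖w t‖ ^ 2) • w t)
        + η • softThresh (w t) (θ t)))
    (h0 : 0 < ‖w 0‖) :
    ∀ t, 0 < ‖w t‖ :=
  weight_never_zero_general n η hη x w α θ hα0 hαη hupd h0
end

section
/- Let E = EuclideanSpace ℝ (Fin n), let w, x ∈ E with w ≠ 0, set y = ⟪x, w⟫, and let α ∈ ℝ. Define ẁ = w − α • (y • (x − (y/‖w‖²) • w)). Then ⟪x, ẁ⟫ = y · (1 − α·(‖x‖² − y²/‖w‖²)). Moreover, if 0 ≤ α·(‖x‖² − y²/‖w‖²) ≤ 2, then |⟪x, ẁ⟫| ≤ |⟪x, w⟫|; that is, the update does not increase the magnitude of the projection of the pattern onto the weight vector. -/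
theorem inner_sub_smul_smul_sub_smul {E : Type*} [NormedAddCommGroup E] [InnerProductSpace ℝ E]
    (x w : E) (α y : ℝ) :
    inner ℝ x (w - α • (y • (x - (y / ‖w‖ ^ 2) • w))) =
      inner ℝ x w - α * y * (‖x‖ ^ 2 - y / ‖w‖ ^ 2 * inner ℝ x w) := by
  simp only [inner_sub_right, inner_smul_right, real_inner_self_eq_norm_sq]
  ring

theorem abs_mul_one_sub_le_abs {y t : ℝ} (ht₀ : 0 ≤ t) (ht₂ : t ≤ 2) :
    |y * (1 - t)| ≤ |y| := by
  have h : |1 - t| ≤ 1 := abs_le.mpr ⟨by linarith, by linarith⟩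
  rw [abs_mul]
  exact mul_le_of_le_one_right (abs_nonneg y) h

theorem update_reduces_projection_general (n : ℕ) (w x : EuclideanSpace ℝ (Fin n))
    (α : ℝ) (y : ℝ) (hy : y = (inner ℝ x w : ℝ))
    (w' : EuclideanSpace ℝ (Fin n))
    (hw' : w' = w - α • (y • (x - (y / ‖w‖ ^ 2) • w))) :
    (inner ℝ x w' : ℝ) = y * (1 - α * (‖x‖ ^ 2 - y ^ 2 / ‖w‖ ^ 2)) ∧
      (0 ≤ α * (‖x‖ ^ 2 - y ^ 2 / ‖w‖ ^ 2) → α * (‖x‖ ^ 2 - y ^ 2 / ‖w‖ ^ 2) ≤ 2 →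
        |(inner ℝ x w' : ℝ)| ≤ |(inner ℝ x w : ℝ)|) := by
  have h_inner : inner ℝ x w' = y * (1 - α * (‖x‖ ^ 2 - y ^ 2 / ‖w‖ ^ 2)) := by
    rw [hw', inner_sub_smul_smul_sub_smul, ← hy]
    ring
  refine ⟨h_inner, fun h₀ h₂ => ?_⟩
  rw [h_inner, ← hy]
  exact abs_mul_one_sub_le_abs h₀ h₂

/-- The learning update does not increase the magnitude of the projection of the
pattern onto the weight vector. -/
theorem update_reduces_projection (n : ℕ) (w x : EuclideanSpace ℝ (Fin n)) (hw : w ≠ 0)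
    (α : ℝ) (y : ℝ) (hy : y = (inner ℝ x w : ℝ))
    (w' : EuclideanSpace ℝ (Fin n))
    (hw' : w' = w - α • (y • (x - (y / ‖w‖ ^ 2) • w))) :
    (inner ℝ x w' : ℝ) = y * (1 - α * (‖x‖ ^ 2 - y ^ 2 / ‖w‖ ^ 2)) ∧
      (0 ≤ α * (‖x‖ ^ 2 - y ^ 2 / ‖w‖ ^ 2) → α * (‖x‖ ^ 2 - y ^ 2 / ‖w‖ ^ 2) ≤ 2 →
        |(inner ℝ x w' : ℝ)| ≤ |(inner ℝ x w : ℝ)|) :=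
  update_reduces_projection_general n w x α y hy w' hw'
end

section
/- Let n ≥ 1, C ≥ 1, let x : Fin C → EuclideanSpace ℝ (Fin n) be a family of patterns, and define E(w) = (1/C) · Σ_{μ} ⟪x μ, w⟫² and, for w ≠ 0, the update direction v(w) = (1/C)·Σ_{μ} ⟪x μ, w⟫ • x μ − (E(w)/‖w‖²) • w. Then for any fixed w ≠ 0, the function h(α) = E(w − α • v(w)) has derivative at α = 0 given by h'(0) = −2·( wᵀA²w − (wᵀAw)²/‖w‖² ) ≤ 0, where A = (1/C)·Σ_{μ} (x μ)(x μ)ᵀ. In particular, the average learning update is a descent direction for the learning cost E. -/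
open Matrix

/-- First-order descent step in the proof of Theorem 2: the average (penalty-free)
learning update is a descent direction for the learning cost `E`. -/
theorem average_update_descent (n C : ℕ) (hn : 1 ≤ n) (hC : 1 ≤ C)
    (x : Fin C → EuclideanSpace ℝ (Fin n))
    (A : Matrix (Fin n) (Fin n) ℝ)
    (hA : A = (1 / (C : ℝ)) • ∑ μ, Matrix.vecMulVec (x μ) (x μ))
    (Ecost : EuclideanSpace ℝ (Fin n) → ℝ)
    (hE : ∀ u : EuclideanSpace ℝ (Fin n),
      Ecost u = (1 / (C : ℝ)) * ∑ μ, (inner ℝ (x μ) u : ℝ) ^ 2)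
    (w : EuclideanSpace ℝ (Fin n)) (hw : w ≠ 0)
    (v : EuclideanSpace ℝ (Fin n))
    (hv : ∀ i, v i = A.mulVec w i - ((w ⬝ᵥ A.mulVec w) / ‖w‖ ^ 2) * w i) :
    HasDerivAt (fun α : ℝ => Ecost (w - α • v))
        (-2 * (w ⬝ᵥ (A * A).mulVec w - (w ⬝ᵥ A.mulVec w) ^ 2 / ‖w‖ ^ 2)) 0 ∧
      -2 * (w ⬝ᵥ (A * A).mulVec w - (w ⬝ᵥ A.mulVec w) ^ 2 / ‖w‖ ^ 2) ≤ 0 := by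
  set b : Fin C → ℝ := fun μ => inner ℝ (x μ) w with hb
  set c : Fin C → ℝ := fun μ => inner ℝ (x μ) v with hc
  set a : EuclideanSpace ℝ (Fin n) := WithLp.toLp 2 (A.mulVec w) with ha
  set d : ℝ := (w ⬝ᵥ A.mulVec w) / ‖w‖ ^ 2 with hd
  have hwnorm : (0:ℝ) < ‖w‖ ^ 2 := pow_pos (norm_pos_iff.mpr hw) 2
  -- inner products are dot products
  have hinner : ∀ (u u' : EuclideanSpace ℝ (Fin n)), (inner ℝ u u' : ℝ) = ∑ i, u i * u' i := by
    intro u u'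
    simp [PiLp.inner_apply, RCLike.inner_apply, mul_comm]
  -- A is symmetric
  have hAsymm : Aᵀ = A := by
    rw [hA]
    ext i j
    simp only [Matrix.transpose_apply, Matrix.smul_apply, Matrix.sum_apply,
      Matrix.vecMulVec_apply, smul_eq_mul]
    congr 1
    exact Finset.sum_congr rfl fun μ _ => mul_comm _ _
  have hbdot : ∀ μ, b μ = ∑ j, x μ j * w j := by
    intro μ; simp only [hb]; rw [hinner]
  have hcdot : ∀ μ, c μ = ∑ i, x μ i * v i := by
    intro μ; simp only [hc]; rw [hinner]
  -- mulVec formula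
  have hAw : ∀ i, a i = (1 / (C : ℝ)) * ∑ μ, x μ i * b μ := by
    intro i
    show (A.mulVec w) i = _
    rw [hA]
    simp only [Matrix.mulVec, dotProduct, Matrix.smul_apply, Matrix.sum_apply,
      smul_eq_mul, Matrix.vecMulVec_apply]
    calc ∑ j, (1 / (C : ℝ) * ∑ μ, x μ i * x μ j) * w j
        = ∑ j, ∑ μ, 1 / (C : ℝ) * (x μ i * (x μ j * w j)) := by
          refine Finset.sum_congr rfl fun j _ => ?_
          rw [Finset.mul_sum, Finset.sum_mul]
          refine Finset.sum_congr rfl fun μ _ => by ring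
      _ = ∑ μ, ∑ j, 1 / (C : ℝ) * (x μ i * (x μ j * w j)) := Finset.sum_comm
      _ = (1 / (C : ℝ)) * ∑ μ, x μ i * b μ := by
          rw [Finset.mul_sum]
          refine Finset.sum_congr rfl fun μ _ => ?_
          rw [hbdot, Finset.mul_sum, Finset.mul_sum]
  -- key sum identity
  have hkey : (1 / (C : ℝ)) * ∑ μ, b μ * c μ = ∑ i, a i * v i := by
    calc (1 / (C : ℝ)) * ∑ μ, b μ * c μ
        = ∑ μ, ∑ i, ((1 / (C : ℝ)) * (x μ i * b μ)) * v i := by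
          rw [Finset.mul_sum]
          refine Finset.sum_congr rfl fun μ _ => ?_
          rw [hcdot, Finset.mul_sum, Finset.mul_sum]
          refine Finset.sum_congr rfl fun i _ => by ring
      _ = ∑ i, ∑ μ, ((1 / (C : ℝ)) * (x μ i * b μ)) * v i := Finset.sum_comm
      _ = ∑ i, a i * v i := by
          refine Finset.sum_congr rfl fun i _ => ?_
          rw [hAw, Finset.mul_sum, ← Finset.sum_mul]
  -- dot product identities
  have hdotAA : w ⬝ᵥ (A * A).mulVec w = ∑ i, a i * a i := by
    rw [← Matrix.mulVec_mulVec, dotProduct_mulVec, ← Matrix.mulVec_transpose, hAsymm]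
    rfl
  have hdotA : w ⬝ᵥ A.mulVec w = ∑ i, a i * w i := by
    rw [dotProduct_comm]; rfl
  -- the derivative value
  have hval : (1 / (C : ℝ)) * ∑ μ, (-2 * b μ) * c μ
      = -2 * (w ⬝ᵥ (A * A).mulVec w - (w ⬝ᵥ A.mulVec w) ^ 2 / ‖w‖ ^ 2) := by
    have h1 : (1 / (C : ℝ)) * ∑ μ, (-2 * b μ) * c μ
        = -2 * ((1 / (C : ℝ)) * ∑ μ, b μ * c μ) := by
      rw [Finset.sum_congr rfl (fun μ _ => by ring :
        ∀ μ ∈ Finset.univ, (-2 * b μ) * c μ = -2 * (b μ * c μ)), ← Finset.mul_sum]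
      ring
    rw [h1, hkey]
    have h2 : ∑ i, a i * v i = (∑ i, a i * a i) - d * ∑ i, a i * w i := by
      rw [Finset.mul_sum, ← Finset.sum_sub_distrib]
      refine Finset.sum_congr rfl fun i _ => ?_
      rw [hv i]
      ring
    rw [h2, hdotAA, ← hdotA, hd]
    ring
  -- derivative
  have hderiv : HasDerivAt (fun α : ℝ => Ecost (w - α • v))
      ((1 / (C : ℝ)) * ∑ μ, (-2 * b μ) * c μ) 0 := by
    have hfeq : (fun α : ℝ => Ecost (w - α • v))
        = fun α : ℝ => (1 / (C : ℝ)) * ∑ μ, (b μ - α * c μ) ^ 2 := by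
      funext α
      rw [hE]
      congr 1
      refine Finset.sum_congr rfl fun μ _ => ?_
      rw [inner_sub_right, real_inner_smul_right]
    rw [hfeq]
    have hsum : HasDerivAt (fun α : ℝ => ∑ μ : Fin C, (b μ - α * c μ) ^ 2)
        (∑ μ : Fin C, (-2 * b μ) * c μ) 0 := by
      refine HasDerivAt.fun_sum fun μ _ => ?_
      have hg : HasDerivAt (fun α : ℝ => b μ - α * c μ) (-(c μ)) 0 := by
        simpa using ((hasDerivAt_id (0:ℝ)).mul_const (c μ)).const_sub (b μ)
      have hp := hg.fun_pow 2
      refine hp.congr_deriv ?_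
      simp
    exact hsum.const_mul _
  refine ⟨hval ▸ hderiv, ?_⟩
  -- Cauchy–Schwarz
  have hcs : (inner ℝ a w : ℝ) * inner ℝ a w ≤ (inner ℝ a a : ℝ) * inner ℝ w w :=
    real_inner_mul_inner_self_le a w
  have haw : (inner ℝ a w : ℝ) = w ⬝ᵥ A.mulVec w := by rw [hinner, ← hdotA]
  have haa : (inner ℝ a a : ℝ) = w ⬝ᵥ (A * A).mulVec w := by rw [hinner, ← hdotAA]
  have hww : (inner ℝ w w : ℝ) = ‖w‖ ^ 2 := real_inner_self_eq_norm_sq w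
  rw [haw, haa, hww] at hcs
  have hle : (w ⬝ᵥ A.mulVec w) ^ 2 / ‖w‖ ^ 2 ≤ w ⬝ᵥ (A * A).mulVec w := by
    rw [div_le_iff₀ hwnorm]
    nlinarith [hcs]
  nlinarith [hle]
end

section
/- Let w ∈ EuclideanSpace ℝ (Fin n) and for σ > 0 define g_σ(w) = Σ_{i} tanh(σ · w_i²). Then g_σ(w) tends to ‖w‖₀ := the number of indices i with w_i ≠ 0, as σ → ∞. -/
open Filter Topology

namespace Real

theorem tanh_eq_one_sub_exp_div (x : ℝ) :
    tanh x = (1 - exp (-(2 * x))) / (1 + exp (-(2 * x))) := by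
  have hx : exp (-x) = exp x * exp (-(2 * x)) := by rw [← exp_add]; ring_nf
  rw [tanh_eq, hx, ← mul_one_sub, ← mul_one_add, mul_div_mul_left _ _ (exp_pos x).ne']

theorem tendsto_tanh_atTop : Tendsto tanh atTop (𝓝 1) := by
  have hexp : Tendsto (fun x : ℝ => exp (-(2 * x))) atTop (𝓝 0) :=
    tendsto_exp_atBot.comp <| tendsto_neg_atTop_atBot.comp <|
      tendsto_id.const_mul_atTop two_pos
  have hlim : Tendsto (fun x => (1 - exp (-(2 * x))) / (1 + exp (-(2 * x)))) atTop
      (𝓝 ((1 - 0) / (1 + 0))) :=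
    (tendsto_const_nhds.sub hexp).div (tendsto_const_nhds.add hexp) (by norm_num)
  simpa [← tanh_eq_one_sub_exp_div] using hlim

end Real

theorem tendsto_tanh_mul_sq_atTop (x : ℝ) :
    Tendsto (fun σ : ℝ => Real.tanh (σ * x ^ 2)) atTop (𝓝 (if x ≠ 0 then 1 else 0)) := by
  by_cases hx : x = 0
  · simp [hx]
  · rw [if_pos hx]
    exact Real.tendsto_tanh_atTop.comp <| tendsto_id.atTop_mul_const (by positivity)

theorem tendsto_sum_tanh_mul_sq_atTop_card_support {ι : Type*} [Fintype ι] (w : ι → ℝ) :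
    Tendsto (fun σ : ℝ => ∑ i, Real.tanh (σ * w i ^ 2)) atTop
      (𝓝 ((Finset.univ.filter fun i => w i ≠ 0).card : ℝ)) := by
  rw [← Finset.sum_boole]
  exact tendsto_finsetSum _ fun i _ => tendsto_tanh_mul_sq_atTop (w i)

/-- The penalty `g_σ(w) = Σᵢ tanh (σ wᵢ²)` tends to the ℓ₀ pseudo-norm `‖w‖₀`
as `σ → ∞`. -/
theorem penalty_tendsto_l0 (n : ℕ) (w : EuclideanSpace ℝ (Fin n)) :
    Tendsto (fun σ : ℝ => ∑ i, Real.tanh (σ * (w i) ^ 2)) atTop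
      (nhds ((Finset.univ.filter fun i => w i ≠ 0).card : ℝ)) :=
  tendsto_sum_tanh_mul_sq_atTop_card_support (fun i => w i)
end
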